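/- For θ ∈ ℝ define X_θ : ℝ² → ℝ⁴ by X_θ(u, v) := cos θ · (sinh u · sin u, sinh u · cos u, cosh u · sinh v, cosh u · cosh v) + sin θ · (−cos u · cos v, sin u · cos v, cosh v · sin v, sinh v · sin v). Then for all (u, v) ∈ ℝ²: ∂_u∂_u X_θ + ∂_v∂_v X_θ = 2·(cos θ · cosh u + sin θ · cos v)·(cos u, −sin u, sinh v, cosh v). Moreover the vector (cos u, −sin u, sinh v, cosh v) is Lorentz-null and never zero; consequently, at every point where cos θ · cosh u + sin θ · cos v ≠ 0, the vector ∂_u∂_u X_θ + ∂_v∂_v X_θ is a nonzero null vector (so the mean curvature vector of the surface parametrized by X_θ is null and nowhere vanishing there). -/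

import Mathlib

/-- The Lorentz bilinear form on ℝ⁴ (Lorentz–Minkowski space 𝕃⁴). -/
def lorR (x y : Fin 4 → ℝ) : ℝ := x 0 * y 0 + x 1 * y 1 + x 2 * y 2 - x 3 * y 3

/-- Partial derivative of a map `ℝ² → ℝ⁴` in the first variable. -/
noncomputable def pd1 (X : ℝ → ℝ → Fin 4 → ℝ) (u v : ℝ) : Fin 4 → ℝ :=
  fun i => deriv (fun t => X t v i) u

/-- Partial derivative of a map `ℝ² → ℝ⁴` in the second variable. -/
noncomputable def pd2 (X : ℝ → ℝ → Fin 4 → ℝ) (u v : ℝ) : Fin 4 → ℝ :=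
  fun i => deriv (fun t => X u t i) v

/-- Second partial derivative `∂_u ∂_u` of a map `ℝ² → ℝ⁴`. -/
noncomputable def pd11 (X : ℝ → ℝ → Fin 4 → ℝ) (u v : ℝ) : Fin 4 → ℝ :=
  fun i => deriv (fun t => deriv (fun s => X s v i) t) u

/-- Second partial derivative `∂_v ∂_v` of a map `ℝ² → ℝ⁴`. -/
noncomputable def pd22 (X : ℝ → ℝ → Fin 4 → ℝ) (u v : ℝ) : Fin 4 → ℝ :=
  fun i => deriv (fun t => deriv (fun s => X u s i) t) v

/-! The Laplacian formula is a coordinatewise computation. The vector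
`N = (cos u, -sin u, sinh v, cosh v)` is null because `cos² u + sin² u = 1 = cosh² v - sinh² v`
and nonzero because `cosh v > 0`, and a nonzero multiple of a nonzero null vector is again
nonzero and null. -/

open Real

lemma lorR_smul_smul (c : ℝ) (x y : Fin 4 → ℝ) :
    lorR (c • x) (c • y) = c ^ 2 * lorR x y := by
  simp only [lorR, Pi.smul_apply, smul_eq_mul]
  ring

lemma lorR_self_cos_sin_sinh_cosh (u v : ℝ) :
    lorR ![cos u, -sin u, sinh v, cosh v] ![cos u, -sin u, sinh v, cosh v] = 0 := by
  simp only [lorR, Matrix.cons_val]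
  linear_combination sin_sq_add_cos_sq u - cosh_sq v

lemma cos_sin_sinh_cosh_ne_zero (u v : ℝ) :
    (![cos u, -sin u, sinh v, cosh v] : Fin 4 → ℝ) ≠ 0 :=
  fun h => (cosh_pos v).ne' (congrFun h 3)

lemma pd11_add_pd22_eq (θ : ℝ) (X : ℝ → ℝ → Fin 4 → ℝ)
    (hX : ∀ u v, X u v = fun i =>
      cos θ * ![sinh u * sin u, sinh u * cos u, cosh u * sinh v, cosh u * cosh v] i
      + sin θ * ![-(cos u * cos v), sin u * cos v, cosh v * sin v, sinh v * sin v] i)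
    (u v : ℝ) (i : Fin 4) :
    pd11 X u v i + pd22 X u v i
      = 2 * (cos θ * cosh u + sin θ * cos v) * ![cos u, -sin u, sinh v, cosh v] i := by
  fin_cases i <;> simp (disch := fun_prop) [pd11, pd22, hX] <;> ring

/-- The Laplacian of `X_θ` is a multiple of a nowhere-vanishing null vector:
the mean curvature vector of `X_θ` is null and nowhere zero where
`cos θ cosh u + sin θ cos v ≠ 0`. -/
theorem stmt_17 (θ : ℝ) (X : ℝ → ℝ → Fin 4 → ℝ)
    (hX : ∀ u v, X u v = fun i =>
      Real.cos θ * ![Real.sinh u * Real.sin u, Real.sinh u * Real.cos u,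
        Real.cosh u * Real.sinh v, Real.cosh u * Real.cosh v] i
      + Real.sin θ * ![-(Real.cos u * Real.cos v), Real.sin u * Real.cos v,
        Real.cosh v * Real.sin v, Real.sinh v * Real.sin v] i) :
    ∀ u v,
      (∀ i, pd11 X u v i + pd22 X u v i
        = 2 * (Real.cos θ * Real.cosh u + Real.sin θ * Real.cos v) *
            ![Real.cos u, -Real.sin u, Real.sinh v, Real.cosh v] i) ∧
      lorR ![Real.cos u, -Real.sin u, Real.sinh v, Real.cosh v]
        ![Real.cos u, -Real.sin u, Real.sinh v, Real.cosh v] = 0 ∧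
      (![Real.cos u, -Real.sin u, Real.sinh v, Real.cosh v] : Fin 4 → ℝ) ≠ 0 ∧
      (Real.cos θ * Real.cosh u + Real.sin θ * Real.cos v ≠ 0 →
        lorR (fun i => pd11 X u v i + pd22 X u v i)
          (fun i => pd11 X u v i + pd22 X u v i) = 0 ∧
        (fun i => pd11 X u v i + pd22 X u v i) ≠ (0 : Fin 4 → ℝ)) := by
  intro u v
  have hlap := pd11_add_pd22_eq θ X hX u v
  have hsum : (fun i => pd11 X u v i + pd22 X u v i)
      = (2 * (cos θ * cosh u + sin θ * cos v)) • ![cos u, -sin u, sinh v, cosh v] :=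
    funext hlap
  refine ⟨hlap, lorR_self_cos_sin_sinh_cosh u v, cos_sin_sinh_cosh_ne_zero u v,
    fun hc => ⟨?_, ?_⟩⟩
  · rw [hsum, lorR_smul_smul, lorR_self_cos_sin_sinh_cosh, mul_zero]
  · rw [hsum]
    exact smul_ne_zero (mul_ne_zero two_ne_zero hc) (cos_sin_sinh_cosh_ne_zero u v)
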